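/- arXiv:2102.05307 — 4 statements merged into one kernel-verified Lean document; each statement's English description precedes it below -/
import Mathlib

section
/- Let κ ≥ 1 be a natural number, m = 2κ+1, α₀ ∈ (0,1), and let η₁, η₂ be reals with 0 < η₂ < η₁. Set d = m^{1−η₂}, ε = m^{−η₁}, a = ⌊(1−α₀)m − d⌋ and â = ⌊a − d⌋, and assume 1 ≤ a. Let (w_k)_{k=1}^m and (u_k)_{k=1}^m be families of nonnegative real numbers, each family having pairwise distinct values, such that: (i) |u_k − w_k| < ε/2 for every k; and (ii) for every k, if r(w_k) ≤ a − d then w_{(a)} − w_k ≥ ε. Then {k : r(w_k) ≤ â} ⊆ {k : r(u_k) ≤ (1−α₀)m}. (This is the pathwise content of Lemma 'glocal filtering' 3.3(a): on the event Ω_{n,j} and for blocks without jumps, the indices selected by the rank filter based on the Brownian-type values w are also selected by the rank filter based on the observed values u.) -/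
open Finset

/-- The rank of `w k` among the family `(w k')_{k'}`:
the number of indices `k'` with `w k' ≤ w k`. -/
noncomputable def rank {m : ℕ} (w : Fin m → ℝ) (k : Fin m) : ℕ :=
  (Finset.univ.filter fun k' => w k' ≤ w k).card

/-- The `r`-th order statistic (the `r`-th smallest value) of the family `w`.
For a family with pairwise distinct values, this is the unique value of rank `r`. -/
noncomputable def orderStat {m : ℕ} (w : Fin m → ℝ) (r : ℕ) : ℝ :=
  if h : ∃ k, rank w k = r then w h.choose else 0

/-! A `w`-rank at most `â ≤ a - d` forces a gap of at least `ε` below `w_{(a)}`. Since `u` is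
within `ε/2` of `w`, every index whose `u`-value is at most `u k` has `w`-value strictly below
`w_{(a)}`, so the `u`-rank of `k` is at most `a ≤ (1 - α₀) m`. -/

namespace RankFilter

variable {m : ℕ} {w : Fin m → ℝ}

lemma one_le_rank (w : Fin m → ℝ) (k : Fin m) : 1 ≤ rank w k :=
  card_pos.mpr ⟨k, by simp⟩

lemma rank_le_card (w : Fin m → ℝ) (k : Fin m) : rank w k ≤ m := by
  simpa [rank] using card_le_univ (univ.filter fun k' => w k' ≤ w k)

lemma rank_lt_rank_of_lt {k k' : Fin m} (h : w k < w k') : rank w k < rank w k' := by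
  refine card_lt_card ⟨fun x hx => ?_, fun hsub => ?_⟩
  · simp only [mem_filter, mem_univ, true_and] at hx ⊢
    exact hx.trans h.le
  · have hk' : k' ∈ univ.filter fun x => w x ≤ w k' := by simp
    exact absurd (by simpa using hsub hk') h.not_ge

lemma rank_injective (hw : Function.Injective w) : Function.Injective (rank w) := by
  intro k k' h
  by_contra hne
  rcases (hw.ne hne).lt_or_gt with hlt | hgt
  · exact (rank_lt_rank_of_lt hlt).ne h
  · exact (rank_lt_rank_of_lt hgt).ne' h

lemma exists_rank_eq (hw : Function.Injective w) {r : ℕ} (hr : 1 ≤ r) (hrm : r ≤ m) :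
    ∃ k, rank w k = r := by
  have hsub : univ.image (rank w) ⊆ Icc 1 m := by
    rintro _ hx
    obtain ⟨k, -, rfl⟩ := mem_image.mp hx
    exact mem_Icc.mpr ⟨one_le_rank w k, rank_le_card w k⟩
  have himage : univ.image (rank w) = Icc 1 m :=
    eq_of_subset_of_card_le hsub (by simp [card_image_of_injective _ (rank_injective hw)])
  have hmem : r ∈ univ.image (rank w) := himage ▸ mem_Icc.mpr ⟨hr, hrm⟩
  simpa using hmem

lemma orderStat_eq_of_rank_eq (hw : Function.Injective w) {k : Fin m} {r : ℕ}
    (h : rank w k = r) : orderStat w r = w k := by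
  have hex : ∃ k, rank w k = r := ⟨k, h⟩
  rw [orderStat, dif_pos hex, rank_injective hw (hex.choose_spec.trans h.symm)]

lemma rank_le_rank_of_add_le {u : Fin m → ℝ} {ε : ℝ} (hu : ∀ k, |u k - w k| < ε / 2)
    {k k₀ : Fin m} (hk : w k + ε ≤ w k₀) : rank u k ≤ rank w k₀ := by
  refine card_le_card fun k' hk' => ?_
  simp only [mem_filter, mem_univ, true_and] at hk' ⊢
  have hk := abs_lt.mp (hu k)
  have hk' := abs_lt.mp (hu k')
  linarith

lemma rank_le_of_add_le_orderStat (hw : Function.Injective w) {u : Fin m → ℝ} {ε : ℝ}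
    (hu : ∀ k, |u k - w k| < ε / 2) {k : Fin m} {r : ℕ} (hr : 1 ≤ r)
    (hk : w k + ε ≤ orderStat w r) : rank u k ≤ r := by
  rcases le_or_gt r m with hrm | hmr
  · obtain ⟨k₀, hk₀⟩ := exists_rank_eq hw hr hrm
    rw [orderStat_eq_of_rank_eq hw hk₀] at hk
    exact hk₀ ▸ rank_le_rank_of_add_le hu hk
  · exact (rank_le_card u k).trans hmr.le

end RankFilter

open RankFilter

theorem stmt_0_general (m : ℕ)
    (α₀ η₂ : ℝ)
    (d ε : ℝ) (hd : d = (m : ℝ) ^ (1 - η₂))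
    (a : ℤ) (ha : a = ⌊(1 - α₀) * (m : ℝ) - d⌋)
    (ahat : ℤ) (hahat : ahat = ⌊(a : ℝ) - d⌋)
    (ha1 : 1 ≤ a)
    (w u : Fin m → ℝ)
    (hwinj : Function.Injective w)
    (h1 : ∀ k, |u k - w k| < ε / 2)
    (h2 : ∀ k, (rank w k : ℝ) ≤ (a : ℝ) - d → orderStat w a.toNat - w k ≥ ε) :
    {k | (rank w k : ℝ) ≤ (ahat : ℝ)} ⊆ {k | (rank u k : ℝ) ≤ (1 - α₀) * (m : ℝ)} := by
  intro k hk
  have hd0 : 0 ≤ d := hd ▸ Real.rpow_nonneg m.cast_nonneg _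
  have hgap := h2 k (hk.trans (hahat ▸ Int.floor_le _))
  have hru : rank u k ≤ a.toNat := rank_le_of_add_le_orderStat hwinj h1 (by omega) (by linarith)
  have hru' : (rank u k : ℝ) ≤ a := by exact_mod_cast (Int.le_toNat (by omega)).mp hru
  have haub : (a : ℝ) ≤ (1 - α₀) * m - d := ha ▸ Int.floor_le _
  exact hru'.trans (by linarith)

/-- Pathwise content of Lemma 3.3(a) (glocal filtering): the indices selected by the
rank filter based on the Brownian-type values `w` are also selected by the rank filter
based on the observed values `u`. -/
theorem stmt_0 (κ : ℕ) (hκ : 1 ≤ κ) (m : ℕ) (hm : m = 2 * κ + 1)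
    (α₀ η₁ η₂ : ℝ) (hα₀ : α₀ ∈ Set.Ioo (0 : ℝ) 1) (hη₂ : 0 < η₂) (hη₁₂ : η₂ < η₁)
    (d ε : ℝ) (hd : d = (m : ℝ) ^ (1 - η₂)) (hε : ε = (m : ℝ) ^ (-η₁))
    (a : ℤ) (ha : a = ⌊(1 - α₀) * (m : ℝ) - d⌋)
    (ahat : ℤ) (hahat : ahat = ⌊(a : ℝ) - d⌋)
    (ha1 : 1 ≤ a)
    (w u : Fin m → ℝ) (hw0 : ∀ k, 0 ≤ w k) (hu0 : ∀ k, 0 ≤ u k)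
    (hwinj : Function.Injective w) (huinj : Function.Injective u)
    (h1 : ∀ k, |u k - w k| < ε / 2)
    (h2 : ∀ k, (rank w k : ℝ) ≤ (a : ℝ) - d → orderStat w a.toNat - w k ≥ ε) :
    {k | (rank w k : ℝ) ≤ (ahat : ℝ)} ⊆ {k | (rank u k : ℝ) ≤ (1 - α₀) * (m : ℝ)} :=
  stmt_0_general m α₀ η₂ d ε hd a ha ahat hahat ha1 w u hwinj h1 h2
end

section
/- Let κ ≥ 1 be a natural number, m = 2κ+1, α₀ ∈ (0,1), and let η₁, η₂ be reals with 0 < η₂ < η₁. Set d = m^{1−η₂}, ε = m^{−η₁}, a = ⌊(1−α₀)m − d⌋ and â = ⌊a − d⌋, and assume 1 ≤ a and d ≥ 2. Let (w_k)_{k=1}^m and (u_k)_{k=1}^m be families of nonnegative real numbers, each family having pairwise distinct values, such that: (i) |u_k − w_k| < ε/2 for every k; and (ii) for every k, if r(w_k) ≤ a − d then w_{(a)} − w_k ≥ ε. Then the cardinality of the set difference {k : r(u_k) ≤ (1−α₀)m} \ {k : r(w_k) ≤ â} is at most 4·m^{1−η₂}. (This is the pathwise content of Lemma 3.3(b): the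 rank filter based on the observed values u selects at most 4m^{1−η₂} indices more than the filter based on the Brownian-type values w.) -/
/-!
An error `|u k - w k| < ε / 2` cannot carry an index whose `w`-value lies at least `ε` below
the order statistic `w_(a)` past rank `a` in the `u`-ordering. Hence the `w`-filter at level
`â ≤ a - d` is contained in the `u`-filter at level `(1 - α₀) m`, and the difference of the two
filters has at most `(1 - α₀) m - â + 1 < 2 d + 3 ≤ 4 d` elements, because ranks of a family
with distinct values run exactly through `1, …, m`.
-/

open Finset

section Rank

variable {m : ℕ}

lemma one_le_rank (w : Fin m → ℝ) (k : Fin m) : 1 ≤ rank w k :=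
  card_pos.mpr ⟨k, mem_filter.mpr ⟨mem_univ k, le_rfl⟩⟩

lemma rank_mem_Icc (w : Fin m → ℝ) (k : Fin m) : rank w k ∈ Icc 1 m :=
  mem_Icc.mpr ⟨one_le_rank w k, (card_filter_le _ _).trans_eq (card_fin m)⟩

lemma rank_lt_rank {w : Fin m → ℝ} {k k' : Fin m} (h : w k < w k') :
    rank w k < rank w k' := by
  refine card_lt_card <| (ssubset_iff_of_subset ?_).mpr ⟨k', by simp, by simpa using h⟩
  exact monotone_filter_right _ fun _ _ hx => hx.trans h.le

lemma rank_injective {w : Fin m → ℝ} (hw : Function.Injective w) :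
    Function.Injective (rank w) := by
  intro k k' h
  by_contra hne
  rcases (hw.ne hne).lt_or_gt with hlt | hgt
  · exact (rank_lt_rank hlt).ne h
  · exact (rank_lt_rank hgt).ne' h

lemma image_rank_univ {w : Fin m → ℝ} (hw : Function.Injective w) :
    univ.image (rank w) = Icc 1 m := by
  refine eq_of_subset_of_card_le (fun r hr => ?_) ?_
  · obtain ⟨k, -, rfl⟩ := mem_image.mp hr
    exact rank_mem_Icc w k
  · simp [card_image_of_injective _ (rank_injective hw)]

lemma exists_rank_eq {w : Fin m → ℝ} (hw : Function.Injective w) {r : ℕ}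
    (hr₁ : 1 ≤ r) (hr : r ≤ m) : ∃ k, rank w k = r := by
  have hmem : r ∈ univ.image (rank w) := image_rank_univ hw ▸ mem_Icc.mpr ⟨hr₁, hr⟩
  simpa using hmem

lemma orderStat_eq {w : Fin m → ℝ} (hw : Function.Injective w) {k : Fin m} {r : ℕ}
    (hk : rank w k = r) : orderStat w r = w k := by
  have hex : ∃ k, rank w k = r := ⟨k, hk⟩
  rw [orderStat, dif_pos hex, rank_injective hw (hex.choose_spec.trans hk.symm)]

lemma cast_rank_le_iff (w : Fin m → ℝ) (k : Fin m) (x : ℝ) :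
    (rank w k : ℝ) ≤ x ↔ rank w k ≤ ⌊x⌋₊ :=
  (Nat.le_floor_iff' (Nat.one_le_iff_ne_zero.mp (one_le_rank w k))).symm

lemma card_filter_rank_le (w : Fin m → ℝ) (n : ℕ) :
    #{k | rank w k ≤ n} ≤ n := by
  obtain hS | hS := (univ.filter fun k => rank w k ≤ n).eq_empty_or_nonempty
  · simp [hS]
  obtain ⟨k, hk, hmax⟩ := exists_max_image _ w hS
  calc #{k | rank w k ≤ n} ≤ rank w k :=
        card_le_card fun k' hk' => by simpa [rank] using hmax k' hk'
    _ ≤ n := (mem_filter.mp hk).2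

lemma card_filter_rank_le_of_injective {w : Fin m → ℝ} (hw : Function.Injective w) (n : ℕ) :
    #{k | rank w k ≤ n} = min n m := by
  have himage : (univ.filter fun k => rank w k ≤ n).image (rank w) = Icc 1 (min n m) := by
    rw [← filter_image (p := (· ≤ n)), image_rank_univ hw]
    ext r
    simp only [mem_filter, mem_Icc, le_min_iff]
    omega
  rw [← card_image_of_injective _ (rank_injective hw), himage, Nat.card_Icc]
  omega

lemma rank_le_of_add_le {w u : Fin m → ℝ} {ε : ℝ} (hu : ∀ k, |u k - w k| < ε / 2)
    {k k₀ : Fin m} (hk : w k + ε ≤ w k₀) : rank u k ≤ rank w k₀ := by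
  refine card_le_card (monotone_filter_right _ fun k' _ hk' => ?_)
  have := abs_lt.mp (hu k)
  have := abs_lt.mp (hu k')
  show w k' ≤ w k₀
  linarith

lemma rank_le_of_add_le_orderStat {w u : Fin m → ℝ} (hw : Function.Injective w) {ε : ℝ}
    (hu : ∀ k, |u k - w k| < ε / 2) {r : ℕ} (hr₁ : 1 ≤ r) (hr : r ≤ m) {k : Fin m}
    (hk : w k + ε ≤ orderStat w r) : rank u k ≤ r := by
  obtain ⟨k₀, hk₀⟩ := exists_rank_eq hw hr₁ hr
  rw [orderStat_eq hw hk₀] at hk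
  exact hk₀ ▸ rank_le_of_add_le hu hk

lemma card_sdiff_filter_rank_lt (u : Fin m → ℝ) {w : Fin m → ℝ} (hw : Function.Injective w)
    {x y : ℝ} (hx : 0 ≤ x) (hy : y ≤ m)
    (hsub : (univ.filter fun k => (rank w k : ℝ) ≤ y) ⊆ univ.filter fun k => (rank u k : ℝ) ≤ x) :
    (#((univ.filter fun k => (rank u k : ℝ) ≤ x) \ univ.filter fun k => (rank w k : ℝ) ≤ y) : ℝ) <
      x - y + 1 := by
  have hcard := card_sdiff_add_card_eq_card hsub
  simp only [cast_rank_le_iff] at hcard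
  rw [card_filter_rank_le_of_injective hw, min_eq_left (Nat.floor_le_of_le hy)] at hcard
  have hA : (#{k | rank u k ≤ ⌊x⌋₊} : ℝ) ≤ x :=
    (Nat.cast_le.mpr (card_filter_rank_le u _)).trans (Nat.floor_le hx)
  have hB := Nat.sub_one_lt_floor y
  simp only [cast_rank_le_iff]
  rw [← hcard] at hA
  push_cast at hA
  linarith

end Rank

theorem stmt_1_general (m : ℕ)
    (α₀ η₂ : ℝ) (hα₀ : α₀ ∈ Set.Ioo (0 : ℝ) 1)
    (d ε : ℝ) (hd : d = (m : ℝ) ^ (1 - η₂))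
    (a : ℤ) (ha : a = ⌊(1 - α₀) * (m : ℝ) - d⌋)
    (ahat : ℤ) (hahat : ahat = ⌊(a : ℝ) - d⌋)
    (hd2 : 2 ≤ d)
    (w u : Fin m → ℝ)
    (hwinj : Function.Injective w)
    (h1 : ∀ k, |u k - w k| < ε / 2)
    (h2 : ∀ k, (rank w k : ℝ) ≤ (a : ℝ) - d → orderStat w a.toNat - w k ≥ ε) :
    ((((Finset.univ.filter fun k => (rank u k : ℝ) ≤ (1 - α₀) * (m : ℝ)) \
        (Finset.univ.filter fun k => (rank w k : ℝ) ≤ (ahat : ℝ))).card : ℝ))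
      ≤ 4 * (m : ℝ) ^ (1 - η₂) := by
  have hx : 0 ≤ (1 - α₀) * m := mul_nonneg (by linarith [hα₀.2]) m.cast_nonneg
  have hxm : (1 - α₀) * m ≤ m := by nlinarith [hα₀.1, m.cast_nonneg (α := ℝ)]
  have ha_le : (a : ℝ) ≤ (1 - α₀) * m - d := ha ▸ Int.floor_le _
  have ha_gt : (1 - α₀) * m - d - 1 < a := ha ▸ Int.sub_one_lt_floor _
  have hahat_le : (ahat : ℝ) ≤ a - d := hahat ▸ Int.floor_le _
  have hahat_gt : (a : ℝ) - d - 1 < ahat := hahat ▸ Int.sub_one_lt_floor _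
  have hsub : (univ.filter fun k => (rank w k : ℝ) ≤ ahat) ⊆
      univ.filter fun k => (rank u k : ℝ) ≤ (1 - α₀) * m := by
    intro k hk
    simp only [mem_filter, mem_univ, true_and] at hk ⊢
    have hk₁ : (1 : ℝ) ≤ rank w k := by exact_mod_cast one_le_rank w k
    lift a to ℕ using by exact_mod_cast (by linarith : (0 : ℝ) ≤ a)
    simp only [Int.cast_natCast, Int.toNat_natCast] at h2 ha_le hahat_le
    have hu_rank : rank u k ≤ a :=
      rank_le_of_add_le_orderStat hwinj h1 (by exact_mod_cast (by linarith : (1 : ℝ) ≤ a))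
        (by exact_mod_cast (by linarith : (a : ℝ) ≤ m)) (by linarith [h2 k (by linarith)])
    calc (rank u k : ℝ) ≤ a := by exact_mod_cast hu_rank
      _ ≤ (1 - α₀) * m := by linarith
  have hcard := card_sdiff_filter_rank_lt u hwinj hx (by linarith) hsub
  rw [← hd]
  linarith

/-- Pathwise content of Lemma 3.3(b) (glocal filtering): the rank filter based on the
observed values `u` selects at most `4 m^{1-η₂}` indices more than the filter based on
the Brownian-type values `w`. -/
theorem stmt_1 (κ : ℕ) (hκ : 1 ≤ κ) (m : ℕ) (hm : m = 2 * κ + 1)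
    (α₀ η₁ η₂ : ℝ) (hα₀ : α₀ ∈ Set.Ioo (0 : ℝ) 1) (hη₂ : 0 < η₂) (hη₁₂ : η₂ < η₁)
    (d ε : ℝ) (hd : d = (m : ℝ) ^ (1 - η₂)) (hε : ε = (m : ℝ) ^ (-η₁))
    (a : ℤ) (ha : a = ⌊(1 - α₀) * (m : ℝ) - d⌋)
    (ahat : ℤ) (hahat : ahat = ⌊(a : ℝ) - d⌋)
    (ha1 : 1 ≤ a) (hd2 : 2 ≤ d)
    (w u : Fin m → ℝ) (hw0 : ∀ k, 0 ≤ w k) (hu0 : ∀ k, 0 ≤ u k)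
    (hwinj : Function.Injective w) (huinj : Function.Injective u)
    (h1 : ∀ k, |u k - w k| < ε / 2)
    (h2 : ∀ k, (rank w k : ℝ) ≤ (a : ℝ) - d → orderStat w a.toNat - w k ≥ ε) :
    ((((Finset.univ.filter fun k => (rank u k : ℝ) ≤ (1 - α₀) * (m : ℝ)) \
        (Finset.univ.filter fun k => (rank w k : ℝ) ≤ (ahat : ℝ))).card : ℝ))
      ≤ 4 * (m : ℝ) ^ (1 - η₂) :=
  stmt_1_general m α₀ η₂ hα₀ d ε hd a ha ahat hahat hd2 w u hwinj h1 h2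
end

section
/- Let α ∈ (0,1) and let γ₁, γ₂ be reals with 0 < γ₂ < γ₁ < 1/2. For each n ∈ ℕ, let (W_j)_{j=1}^n be random variables on a probability space (Ω, F, P) that are independent and each distributed according to the standard normal law N(0,1). Set a_n = ⌊(1−α)n − n^{1−γ₂}⌋ and, for j ∈ {1,…,n}, define the event N_{n,j} = {r_n(|W_j|) ≤ a_n − n^{1−γ₂}} ∩ {|W|_{(a_n)} − |W_j| < n^{−γ₁}}, where r_n(|W_j|) is the rank of |W_j| among |W_1|, …, |W_n| and |W|_{(a_n)} is the a_n-th smallest of these values. Then for every L > 0, P[⋃_{j=1}^n N_{n,j}] = O(n^{−L}) as n → ∞. -/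
open MeasureTheory ProbabilityTheory Filter Finset
open scoped ENNReal

/-- Rank of `x k` within the family `(x k')_{k' ∈ s}`. -/
noncomputable def rankIn (s : Finset ℕ) (x : ℕ → ℝ) (k : ℕ) : ℕ :=
  (s.filter fun k' => x k' ≤ x k).card

/-- The `r`-th order statistic (the `r`-th smallest value) of the family `(x k)_{k ∈ s}`.
For a family with pairwise distinct values, this is the unique value of rank `r`. -/
noncomputable def orderStatIn (s : Finset ℕ) (x : ℕ → ℝ) (r : ℕ) : ℝ :=
  if h : ∃ k, k ∈ s ∧ rankIn s x k = r then x h.choose else 0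

/-!
Outside the null event of ties among the `|W_i|`, the ranks strictly between `r_n(|W_j|)` and `a_n`
belong to at least `m = ⌈n^{1-γ₂}⌉` indices `i` with `|W_j| < |W_i| ≤ |W|_{(a_n)}`, so these `|W_i|`
lie within `δ = n^{-γ₁}` of `|W_j|`, hence in one window `[kδ, (k+2)δ)`. The law of `|W|` has
density at most `2`, so by independence a given window holds `m` prescribed values with probability
at most `(4δ)^{m-1}` times the probability of the window, and these probabilities add up to at most
`2`. The union bound gives `2 C(n,m) (4δ)^{m-1} ≤ n (4eδn/m)^m`, and `4eδn/m ≤ 4e n^{γ₂-γ₁} → 0`,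
which leaves `n · exp(-n^{1-γ₂})`, smaller than any power of `n`.
-/

section Rank

variable {s : Finset ℕ} {x : ℕ → ℝ} {i j k : ℕ}

lemma rankIn_mono (h : x i ≤ x k) : rankIn s x i ≤ rankIn s x k :=
  card_le_card <| monotone_filter_right _ fun _ _ hl => hl.trans h

lemma rankIn_lt_rankIn (hi : i ∈ s) (h : x k < x i) : rankIn s x k < rankIn s x i := by
  refine card_lt_card <| (ssubset_iff_of_subset <| monotone_filter_right _
    fun _ _ hl => hl.trans h.le).2 ⟨i, ?_, ?_⟩ <;> simp [hi, h]

lemma rankIn_le_rankIn_iff (hi : i ∈ s) : rankIn s x i ≤ rankIn s x k ↔ x i ≤ x k :=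
  ⟨fun h => not_lt.1 fun h' => (rankIn_lt_rankIn hi h').not_ge h, rankIn_mono⟩

lemma rankIn_mem_Icc (hi : i ∈ s) : rankIn s x i ∈ Icc 1 #s :=
  mem_Icc.2 ⟨card_pos.2 ⟨i, mem_filter.2 ⟨hi, le_rfl⟩⟩, card_filter_le _ _⟩

lemma rankIn_injOn (hx : Set.InjOn x s) : Set.InjOn (rankIn s x) s := fun _ hi _ hk h =>
  hx hi hk <| le_antisymm ((rankIn_le_rankIn_iff hi).1 h.le) ((rankIn_le_rankIn_iff hk).1 h.ge)

lemma exists_rankIn_eq (hx : Set.InjOn x s) {r : ℕ} (hr : r ∈ Icc 1 #s) :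
    ∃ c ∈ s, rankIn s x c = r :=
  surjOn_of_injOn_of_card_le _ (fun _ hi => rankIn_mem_Icc hi) (rankIn_injOn hx) (by simp) hr

lemma orderStatIn_rankIn (hx : Set.InjOn x s) (hk : k ∈ s) :
    orderStatIn s x (rankIn s x k) = x k := by
  have h : ∃ c, c ∈ s ∧ rankIn s x c = rankIn s x k := ⟨k, hk, rfl⟩
  rw [orderStatIn, dif_pos h]
  exact congrArg x (rankIn_injOn hx h.choose_spec.1 hk h.choose_spec.2)

lemma exists_card_eq_forall_mem_Ico (hx : Set.InjOn x s) (hj : j ∈ s) {a m : ℕ} {δ : ℝ}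
    (has : a ≤ #s) (hrank : rankIn s x j + m ≤ a) (hδ : orderStatIn s x a - x j < δ) :
    ∃ S ⊆ s, #S = m ∧ ∀ i ∈ S, x i ∈ Set.Ico (x j) (x j + δ) := by
  obtain ⟨c, hc, rfl⟩ := exists_rankIn_eq hx (mem_Icc.2 ⟨by
    have := (mem_Icc.1 (rankIn_mem_Icc (x := x) hj)).1; omega, has⟩)
  rw [orderStatIn_rankIn hx hc] at hδ
  have hjc : x j ≤ x c := (rankIn_le_rankIn_iff hj).1 (by omega)
  classical
  -- by the definition of `rankIn`, `T` has `a - rankIn s x j` elements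
  set T := s.filter (fun i => x i ≤ x c) \ s.filter (fun i => x i ≤ x j)
  have hT : m ≤ #T := by
    rw [card_sdiff_of_subset (monotone_filter_right _ fun _ _ hl => hl.trans hjc)]
    unfold rankIn at hrank
    omega
  obtain ⟨S, hST, rfl⟩ := exists_subset_card_eq hT
  refine ⟨S, hST.trans (sdiff_subset.trans (filter_subset _ _)), rfl, fun i hi => ?_⟩
  have hiT := hST hi
  simp only [T, Finset.mem_sdiff, mem_filter, not_and, not_le] at hiT
  exact ⟨(hiT.2 hiT.1.1).le, by linarith [hiT.1.2]⟩

end Rank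

lemma injOn_Icc_of_injective {n : ℕ} {x : ℕ → ℝ}
    (hx : Function.Injective fun j : Fin n => x (j + 1)) : Set.InjOn x (Icc 1 n) := by
  intro i hi l hl h
  simp only [coe_Icc, Set.mem_Icc] at hi hl
  have := @hx ⟨i - 1, by omega⟩ ⟨l - 1, by omega⟩
    (by simp only; rwa [Nat.sub_add_cancel hi.1, Nat.sub_add_cancel hl.1])
  simp only [Fin.mk.injEq] at this
  omega

lemma exists_fin_card_eq_of_subset_Icc {n : ℕ} {S : Finset ℕ} (hS : S ⊆ Icc 1 n) :
    ∃ T : Finset (Fin n), #T = #S ∧ ∀ j ∈ T, (j : ℕ) + 1 ∈ S := by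
  classical
  have hinj : Function.Injective fun j : Fin n => (j : ℕ) + 1 :=
    fun _ _ h => Fin.ext (Nat.add_right_cancel h)
  refine ⟨S.preimage _ hinj.injOn, ?_, fun _ hj => by rwa [Finset.mem_preimage] at hj⟩
  rw [card_preimage, filter_true_of_mem]
  intro i hi
  have := mem_Icc.1 (hS hi)
  exact ⟨⟨i - 1, by omega⟩, by simp only; omega⟩

lemma Ico_subset_Ico_floor_div {y δ : ℝ} (hy : 0 ≤ y) (hδ : 0 < δ) :
    Set.Ico y (y + δ) ⊆ Set.Ico (⌊y / δ⌋₊ * δ) ((⌊y / δ⌋₊ + 2) * δ) := by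
  have h1 : ⌊y / δ⌋₊ * δ ≤ y := (le_div_iff₀ hδ).1 (Nat.floor_le (div_nonneg hy hδ.le))
  have h2 : y < (⌊y / δ⌋₊ + 1) * δ := (div_lt_iff₀ hδ).1 (Nat.lt_floor_add_one _)
  exact Set.Ico_subset_Ico h1 (by linarith)

lemma exists_window_of_rankIn_add_le {n a m : ℕ} {x : ℕ → ℝ} {δ : ℝ}
    (hx : Function.Injective fun j : Fin n => x (j + 1)) (hx0 : ∀ i, 0 ≤ x i) (hδ : 0 < δ)
    {j : ℕ} (hj : j ∈ Icc 1 n) (han : a ≤ n) (hrank : rankIn (Icc 1 n) x j + m ≤ a)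
    (hos : orderStatIn (Icc 1 n) x a - x j < δ) :
    ∃ k : ℕ, ∃ T : Finset (Fin n), #T = m ∧
      ∀ i ∈ T, x (i + 1) ∈ Set.Ico (k * δ) ((k + 2) * δ) := by
  obtain ⟨S, hS, rfl, hSx⟩ := exists_card_eq_forall_mem_Ico (injOn_Icc_of_injective hx) hj
    (by simpa using han) hrank hos
  obtain ⟨T, hT, hTS⟩ := exists_fin_card_eq_of_subset_Icc hS
  exact ⟨⌊x j / δ⌋₊, T, hT, fun i hi => Ico_subset_Ico_floor_div (hx0 j) hδ (hSx _ (hTS i hi))⟩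

lemma add_le_toNat_of_le_sub {r m : ℕ} {A : ℤ} {t : ℝ} (h : (r : ℝ) ≤ A - t)
    (hm : (m : ℝ) < t + 1) : r + m ≤ A.toNat := by
  have : ((r + m : ℕ) : ℝ) < A + 1 := by push_cast; linarith
  have : ((r + m : ℕ) : ℤ) < A + 1 := by exact_mod_cast this
  omega

section Independence

variable {Ω ι β : Type*} [MeasurableSpace Ω] {P : Measure Ω} [MeasurableSpace β]

lemma ProbabilityTheory.IndepFun.measure_eq_eq_zero [IsFiniteMeasure P] [MeasurableEq β]
    {X Y : Ω → β} (hX : Measurable X) (hY : Measurable Y) (hXY : IndepFun X Y P)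
    [NullSingletonClass (P.map Y)] : P {ω | X ω = Y ω} = 0 := by
  calc P {ω | X ω = Y ω} = (P.map fun ω => (X ω, Y ω)) (Set.diagonal β) := by
        rw [Measure.map_apply (hX.prodMk hY) measurableSet_diagonal]; rfl
    _ = 0 := by
        rw [(indepFun_iff_map_prod_eq_prod_map_map hX.aemeasurable hY.aemeasurable).1 hXY,
          Measure.prod_apply measurableSet_diagonal]
        simp [Set.preimage, Set.diagonal]

variable {X : ι → Ω → β} {μ : Measure β}

lemma ProbabilityTheory.iIndepFun.ae_injective [IsFiniteMeasure P] [MeasurableEq β] [Countable ι]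
    [NullSingletonClass μ] (hX : ∀ i, Measurable (X i)) (hind : iIndepFun X P)
    (hlaw : ∀ i, P.map (X i) = μ) : ∀ᵐ ω ∂P, Function.Injective fun i => X i ω := by
  have hsub : {ω | ¬Function.Injective fun i => X i ω} ⊆
      ⋃ i, ⋃ l, {ω | i ≠ l ∧ X i ω = X l ω} := by
    intro ω hω
    simp only [Function.Injective, not_forall] at hω
    obtain ⟨i, l, h, hne⟩ := hω
    exact Set.mem_iUnion₂.2 ⟨i, l, hne, h⟩
  refine measure_mono_null hsub (measure_iUnion_null fun i => measure_iUnion_null fun l => ?_)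
  by_cases hil : i = l
  · simp [hil]
  · have : NullSingletonClass (P.map (X l)) := hlaw l ▸ inferInstance
    exact measure_mono_null (fun ω hω => hω.2)
      ((hind.indepFun hil).measure_eq_eq_zero (hX i) (hX l))

lemma ProbabilityTheory.iIndepFun.measure_exists_card_eq_forall_mem_le [Fintype ι]
    (hX : ∀ i, Measurable (X i)) (hind : iIndepFun X P) (hlaw : ∀ i, P.map (X i) = μ)
    {B : Set β} (hB : MeasurableSet B) (m : ℕ) :
    P {ω | ∃ S : Finset ι, #S = m ∧ ∀ i ∈ S, X i ω ∈ B}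
      ≤ (Fintype.card ι).choose m * μ B ^ m := by
  have hsub : {ω | ∃ S : Finset ι, #S = m ∧ ∀ i ∈ S, X i ω ∈ B} ⊆
      ⋃ S ∈ (univ : Finset ι).powersetCard m, ⋂ i ∈ S, X i ⁻¹' B := by
    rintro ω ⟨S, hS, hSB⟩
    exact Set.mem_biUnion (mem_powersetCard.2 ⟨subset_univ S, hS⟩) (Set.mem_iInter₂.2 hSB)
  calc _ ≤ ∑ S ∈ (univ : Finset ι).powersetCard m, P (⋂ i ∈ S, X i ⁻¹' B) :=
        (measure_mono hsub).trans (measure_biUnion_finset_le _ _)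
    _ = ∑ S ∈ (univ : Finset ι).powersetCard m, μ B ^ m := by
        refine sum_congr rfl fun S hS => ?_
        rw [hind.meas_biInter fun i _ => ⟨B, hB, rfl⟩,
          prod_congr rfl fun i _ => (hlaw i ▸ Measure.map_apply (hX i) hB).symm, prod_const,
          (mem_powersetCard.1 hS).2]
    _ = _ := by simp

end Independence

lemma gaussianReal_zero_one_le_volume : gaussianReal 0 1 ≤ volume := by
  rw [gaussianReal_of_var_ne_zero _ one_ne_zero]
  conv_rhs => rw [← withDensity_one (μ := volume)]
  refine withDensity_mono (ae_of_all _ fun x => ENNReal.ofReal_le_one.2 ?_)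
  have h2π : 1 ≤ √(2 * Real.pi) := Real.one_le_sqrt.2 (by linarith [Real.pi_gt_three])
  simp only [gaussianPDFReal, NNReal.coe_one, mul_one, sub_zero]
  exact mul_le_one₀ (inv_le_one_of_one_le₀ h2π) (Real.exp_nonneg _)
    (Real.exp_le_one_iff.2 (by nlinarith [sq_nonneg x]))

lemma volume_abs_preimage_Ico_le (c d : ℝ) :
    volume (abs ⁻¹' Set.Ico c d) ≤ 2 * ENNReal.ofReal (d - c) := by
  have hsub : abs ⁻¹' Set.Ico c d ⊆ Set.Ioc (-d) (-c) ∪ Set.Ico c d := by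
    intro y ⟨hcy, hyd⟩
    rcases abs_choice y with h | h <;> rw [h] at hcy hyd
    · exact Or.inr ⟨hcy, hyd⟩
    · exact Or.inl ⟨by linarith, by linarith⟩
  calc _ ≤ volume (Set.Ioc (-d) (-c)) + volume (Set.Ico c d) :=
        (measure_mono hsub).trans (measure_union_le _ _)
    _ = 2 * ENNReal.ofReal (d - c) := by
        rw [Real.volume_Ioc, Real.volume_Ico, two_mul, neg_sub_neg]

lemma map_abs_gaussianReal_Ico_le (c d : ℝ) :
    (gaussianReal 0 1).map abs (Set.Ico c d) ≤ 2 * ENNReal.ofReal (d - c) := by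
  rw [Measure.map_apply measurable_abs measurableSet_Ico]
  exact (gaussianReal_zero_one_le_volume _).trans (volume_abs_preimage_Ico_le c d)

lemma nullSingletonClass_map_abs (μ : Measure ℝ) [NullSingletonClass μ] :
    NullSingletonClass (μ.map abs) := by
  refine ⟨fun y => ?_⟩
  rw [Measure.map_apply measurable_abs (measurableSet_singleton y)]
  refine measure_mono_null (fun x (hx : |x| = y) => ?_) ((Set.toFinite {y, -y}).measure_zero μ)
  rcases abs_choice x with h | h <;> rw [h] at hx <;> simp [← hx]

lemma tsum_measure_Ico_add_two_le {a : ℕ → ℝ} (ha : Monotone a) (μ : Measure ℝ) :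
    ∑' k, μ (Set.Ico (a k) (a (k + 2))) ≤ 2 * μ Set.univ := by
  set q := fun k => μ (Set.Ico (a k) (a (k + 1)))
  have hq : ∑' k, q k ≤ μ Set.univ :=
    (measure_iUnion ha.pairwise_disjoint_on_Ico_succ fun _ => measurableSet_Ico).symm.trans_le
      (measure_mono (Set.subset_univ _))
  calc ∑' k, μ (Set.Ico (a k) (a (k + 2))) ≤ ∑' k, (q k + q (k + 1)) :=
        ENNReal.tsum_le_tsum fun k => by
          rw [← Set.Ico_union_Ico_eq_Ico (ha k.le_succ) (ha (k + 1).le_succ)]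
          exact measure_union_le _ _
    _ = ∑' k, q k + ∑' k, q (k + 1) := ENNReal.tsum_add
    _ ≤ μ Set.univ + μ Set.univ :=
        add_le_add hq ((ENNReal.tsum_comp_le_tsum_of_injective (add_left_injective 1) q).trans hq)
    _ = 2 * μ Set.univ := (two_mul _).symm

lemma ENNReal.tsum_pow_le_pow_sub_one_mul_tsum {ι : Type*} {p : ι → ℝ≥0∞} {r : ℝ≥0∞}
    (hp : ∀ k, p k ≤ r) {m : ℕ} (hm : m ≠ 0) : ∑' k, p k ^ m ≤ r ^ (m - 1) * ∑' k, p k := by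
  rw [← ENNReal.tsum_mul_left]
  exact ENNReal.tsum_le_tsum fun k => by rw [← pow_sub_one_mul hm]; gcongr; exact hp k

lemma ProbabilityTheory.iIndepFun.measure_not_injective_union_window_le {Ω ι : Type*}
    [MeasurableSpace Ω] {P : Measure Ω} [IsFiniteMeasure P] [Fintype ι] {X : ι → Ω → ℝ}
    {μ : Measure ℝ} [IsProbabilityMeasure μ] [NullSingletonClass μ]
    (hX : ∀ i, Measurable (X i)) (hind : iIndepFun X P) (hlaw : ∀ i, P.map (X i) = μ)
    {a : ℕ → ℝ} (ha : Monotone a) {r : ℝ≥0∞} (hr : ∀ k, μ (Set.Ico (a k) (a (k + 2))) ≤ r)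
    {m : ℕ} (hm : m ≠ 0) :
    P ({ω | ¬Function.Injective fun i => X i ω} ∪
        ⋃ k, {ω | ∃ S : Finset ι, #S = m ∧ ∀ i ∈ S, X i ω ∈ Set.Ico (a k) (a (k + 2))})
      ≤ (Fintype.card ι).choose m * r ^ (m - 1) * 2 := by
  calc _ ≤ 0 + ∑' k, (Fintype.card ι).choose m * μ (Set.Ico (a k) (a (k + 2))) ^ m :=
        (measure_union_le _ _).trans <| add_le_add (ae_iff.1 (hind.ae_injective hX hlaw)).le <|
          (measure_iUnion_le _).trans <| ENNReal.tsum_le_tsum fun k =>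
            hind.measure_exists_card_eq_forall_mem_le hX hlaw measurableSet_Ico m
    _ ≤ (Fintype.card ι).choose m * (r ^ (m - 1) * (2 * μ Set.univ)) := by
        rw [zero_add, ENNReal.tsum_mul_left]
        gcongr
        exact (ENNReal.tsum_pow_le_pow_sub_one_mul_tsum hr hm).trans
          (by gcongr; exact tsum_measure_Ico_add_two_le ha μ)
    _ = _ := by rw [measure_univ, mul_one, mul_assoc]

lemma ProbabilityTheory.iIndepFun.measure_abs_not_injective_union_window_le {Ω ι : Type*}
    [MeasurableSpace Ω] {P : Measure Ω} [IsFiniteMeasure P] [Fintype ι] {X : ι → Ω → ℝ}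
    (hX : ∀ i, Measurable (X i)) (hind : iIndepFun X P)
    (hlaw : ∀ i, P.map (X i) = gaussianReal 0 1) {δ : ℝ} (hδ : 0 < δ) {m : ℕ} (hm : m ≠ 0) :
    (P ({ω | ¬Function.Injective fun i => |X i ω|} ∪ ⋃ k : ℕ,
        {ω | ∃ S : Finset ι, #S = m ∧ ∀ i ∈ S, |X i ω| ∈ Set.Ico (k * δ) ((k + 2) * δ)})).toReal
      ≤ 2 * (Fintype.card ι).choose m * (4 * δ) ^ (m - 1) := by
  have := nullSingletonClass_gaussianReal (μ := 0) one_ne_zero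
  have := nullSingletonClass_map_abs (gaussianReal 0 1)
  have := Measure.isProbabilityMeasure_map (μ := gaussianReal 0 1) measurable_abs.aemeasurable
  have hP := (hind.comp _ fun _ => measurable_abs).measure_not_injective_union_window_le
    (fun i => (hX i).abs) (fun i => by rw [← hlaw i, Measure.map_map measurable_abs (hX i)]; rfl)
    (a := fun k => k * δ) (fun k l hkl => mul_le_mul_of_nonneg_right (Nat.cast_le.2 hkl) hδ.le)
    (r := ENNReal.ofReal (4 * δ)) (fun k => (map_abs_gaussianReal_Ico_le _ _).trans_eq (by
      rw [← ENNReal.ofReal_ofNat 2, ← ENNReal.ofReal_mul zero_le_two]; push_cast; ring_nf)) hm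
  push_cast at hP
  refine (ENNReal.toReal_mono (by finiteness) hP).trans_eq ?_
  rw [ENNReal.toReal_mul, ENNReal.toReal_mul, ENNReal.toReal_pow,
    ENNReal.toReal_ofReal (by positivity), ENNReal.toReal_natCast, ENNReal.toReal_ofNat]
  ring

section Asymptotics

open Real Nat Topology

lemma choose_mul_pow_le (n m : ℕ) {q : ℝ} (hq : 0 ≤ q) :
    (n.choose m : ℝ) * q ^ m ≤ (exp 1 * n * q / m) ^ m := by
  rcases m.eq_zero_or_pos with rfl | hm
  · simp
  have hfact : (m : ℝ) ^ m ≤ m ! * exp 1 ^ m := by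
    rw [← Real.exp_nat_mul, mul_one, ← div_le_iff₀' (by positivity)]
    exact Real.pow_div_factorial_le_exp _ m.cast_nonneg m
  calc (n.choose m : ℝ) * q ^ m ≤ (n : ℝ) ^ m / m ! * q ^ m := by
        gcongr; exact Nat.choose_le_pow_div m n
    _ = (exp 1 * n * q) ^ m / (m ! * exp 1 ^ m) := by
        rw [mul_pow, mul_pow]; field_simp
    _ ≤ (exp 1 * n * q) ^ m / m ^ m := by gcongr
    _ = _ := (div_pow _ _ _).symm

lemma eventually_mul_rpow_neg_div_ceil_le {γ₁ γ₂ ε : ℝ} (h : γ₂ < γ₁) (hε : 0 < ε) :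
    ∀ᶠ n : ℕ in atTop, (n : ℝ) * (n : ℝ) ^ (-γ₁) / ⌈(n : ℝ) ^ (1 - γ₂)⌉₊ ≤ ε := by
  have ht : Tendsto (fun n : ℕ => (n : ℝ) ^ (-(γ₁ - γ₂))) atTop (𝓝 0) :=
    (tendsto_rpow_neg_atTop (by linarith)).comp tendsto_natCast_atTop_atTop
  filter_upwards [ht.eventually (Iic_mem_nhds hε), eventually_ge_atTop 1] with n hε' hn
  have hn0 : (0 : ℝ) < n := by exact_mod_cast hn
  calc (n : ℝ) * (n : ℝ) ^ (-γ₁) / ⌈(n : ℝ) ^ (1 - γ₂)⌉₊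
      ≤ (n : ℝ) * (n : ℝ) ^ (-γ₁) / (n : ℝ) ^ (1 - γ₂) :=
        div_le_div_of_nonneg_left (by positivity) (by positivity) (Nat.le_ceil _)
    _ = (n : ℝ) ^ (-(γ₁ - γ₂)) := by
        rw [show (n : ℝ) * (n : ℝ) ^ (-γ₁) = (n : ℝ) ^ (1 + -γ₁) by rw [rpow_add hn0, rpow_one],
          ← rpow_sub hn0]
        ring_nf
    _ ≤ ε := hε'

lemma eventually_mul_exp_neg_rpow_le {c : ℝ} (hc : 0 < c) (L : ℝ) :
    ∀ᶠ n : ℕ in atTop, (n : ℝ) * exp (-(n : ℝ) ^ c) ≤ (n : ℝ) ^ (-L) := by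
  have ht := (tendsto_rpow_mul_exp_neg_mul_atTop_nhds_zero ((1 + L) / c) 1 one_pos).comp
    ((tendsto_rpow_atTop hc).comp (tendsto_natCast_atTop_atTop (R := ℝ)))
  filter_upwards [ht.eventually (Iic_mem_nhds one_pos), eventually_ge_atTop 1] with n hn h1
  have hn0 : (0 : ℝ) < n := by exact_mod_cast h1
  simp only [Function.comp_apply, ← rpow_mul hn0.le, mul_div_cancel₀ _ hc.ne', neg_one_mul] at hn
  calc (n : ℝ) * exp (-(n : ℝ) ^ c)
      = (n : ℝ) ^ (-L) * ((n : ℝ) ^ (1 + L) * exp (-(n : ℝ) ^ c)) := by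
        rw [← mul_assoc, ← rpow_add hn0]; simp
    _ ≤ (n : ℝ) ^ (-L) := mul_le_of_le_one_right (by positivity) hn

lemma eventually_two_mul_choose_mul_pow_le {γ₁ γ₂ : ℝ} (h₁₂ : γ₂ < γ₁) (h₁ : γ₁ ≤ 1) (L : ℝ) :
    ∀ᶠ n : ℕ in atTop, 2 * (n.choose ⌈(n : ℝ) ^ (1 - γ₂)⌉₊ : ℝ) *
      (4 * (n : ℝ) ^ (-γ₁)) ^ (⌈(n : ℝ) ^ (1 - γ₂)⌉₊ - 1) ≤ (n : ℝ) ^ (-L) := by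
  filter_upwards [eventually_ge_atTop 1,
    eventually_mul_exp_neg_rpow_le (c := 1 - γ₂) (by linarith) L,
    eventually_mul_rpow_neg_div_ceil_le h₁₂ (by positivity : 0 < exp (-1) / (4 * exp 1))]
    with n hn hdecay hratio
  set m := ⌈(n : ℝ) ^ (1 - γ₂)⌉₊
  set q := 4 * (n : ℝ) ^ (-γ₁)
  have hn0 : (0 : ℝ) < n := by exact_mod_cast hn
  have hm : m ≠ 0 := (Nat.ceil_pos.2 (by positivity)).ne'
  have hq : 0 < q := by positivity
  have hchoose : (n.choose m : ℝ) * q ^ m ≤ exp (-1) ^ m := by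
    refine (choose_mul_pow_le n m hq.le).trans (pow_le_pow_left₀ (by positivity) ?_ m)
    calc exp 1 * n * q / m = 4 * exp 1 * ((n : ℝ) * (n : ℝ) ^ (-γ₁) / m) := by ring
      _ ≤ 4 * exp 1 * (exp (-1) / (4 * exp 1)) := by gcongr
      _ = exp (-1) := by field_simp
  have h2q : 2 / q ≤ n := by
    calc 2 / q = (n : ℝ) ^ γ₁ / 2 := by
          rw [div_eq_div_iff hq.ne' two_ne_zero, mul_left_comm, ← rpow_add hn0]; norm_num
      _ ≤ (n : ℝ) ^ γ₁ := by linarith [rpow_nonneg hn0.le γ₁]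
      _ ≤ (n : ℝ) ^ (1 : ℝ) := rpow_le_rpow_of_exponent_le (by exact_mod_cast hn) h₁
      _ = n := rpow_one _
  calc 2 * (n.choose m : ℝ) * q ^ (m - 1) = 2 / q * ((n.choose m : ℝ) * q ^ m) := by
        rw [← pow_sub_one_mul hm]; field_simp
    _ ≤ n * exp (-1) ^ m := mul_le_mul h2q hchoose (by positivity) hn0.le
    _ = n * exp (-m) := by rw [← Real.exp_nat_mul]; ring_nf
    _ ≤ n * exp (-(n : ℝ) ^ (1 - γ₂)) := by gcongr; exact Nat.le_ceil _
    _ ≤ (n : ℝ) ^ (-L) := hdecay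

end Asymptotics

theorem stmt_5_general {Ω : Type*} [MeasurableSpace Ω] (P : Measure Ω) [IsProbabilityMeasure P]
    (α γ₁ γ₂ : ℝ) (hα : α ∈ Set.Ioo (0 : ℝ) 1)
    (hγ₁₂ : γ₂ < γ₁) (hγ₁ : γ₁ < 1 / 2)
    (W : ℕ → ℕ → Ω → ℝ) (hWmeas : ∀ n k, Measurable (W n k))
    (hWindep : ∀ n : ℕ, iIndepFun (m := fun _ : Fin n => Real.measurableSpace)
      (fun j : Fin n => W n (j.1 + 1)) P)
    (hWlaw : ∀ n : ℕ, ∀ j ∈ Finset.Icc 1 n, Measure.map (W n j) P = gaussianReal 0 1)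
    (L : ℝ) :
    ∃ C : ℝ, ∀ᶠ n : ℕ in atTop,
      (P (⋃ j ∈ Finset.Icc 1 n,
        {ω : Ω |
          (rankIn (Finset.Icc 1 n) (fun i => |W n i ω|) j : ℝ)
              ≤ (⌊(1 - α) * (n : ℝ) - (n : ℝ) ^ (1 - γ₂)⌋ : ℝ) - (n : ℝ) ^ (1 - γ₂) ∧
          orderStatIn (Finset.Icc 1 n) (fun i => |W n i ω|)
              (⌊(1 - α) * (n : ℝ) - (n : ℝ) ^ (1 - γ₂)⌋).toNat
            - |W n j ω| < (n : ℝ) ^ (-γ₁)})).toReal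
      ≤ C * (n : ℝ) ^ (-L) := by
  refine ⟨1, ?_⟩
  filter_upwards [eventually_ge_atTop 1, eventually_two_mul_choose_mul_pow_le hγ₁₂ (by linarith) L]
    with n hn hbound
  set t := (n : ℝ) ^ (1 - γ₂)
  set δ := (n : ℝ) ^ (-γ₁)
  have hδ : 0 < δ := by positivity
  have hAn : (⌊(1 - α) * (n : ℝ) - t⌋).toNat ≤ n := by
    have ht : 0 ≤ t := by positivity
    have : ⌊(1 - α) * (n : ℝ) - t⌋ ≤ n :=
      Int.floor_le_iff.2 (by push_cast; nlinarith [mul_nonneg hα.1.le n.cast_nonneg])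
    omega
  have hP := (hWindep n).measure_abs_not_injective_union_window_le (fun _ => hWmeas n _)
    (fun j => hWlaw n _ (mem_Icc.2 ⟨by omega, j.2⟩)) hδ (Nat.ceil_pos.2 (by positivity : 0 < t)).ne'
  rw [Fintype.card_fin] at hP
  rw [one_mul]
  refine le_trans ?_ (hP.trans hbound)
  refine ENNReal.toReal_mono (measure_ne_top _ _) (measure_mono fun ω hω => ?_)
  obtain ⟨j, hj, hrank, hos⟩ := Set.mem_iUnion₂.1 hω
  by_cases hinj : Function.Injective fun i : Fin n => |W n (i + 1) ω|
  · obtain ⟨k, S, hS⟩ := exists_window_of_rankIn_add_le hinj (fun _ => abs_nonneg _) hδ hj hAn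
      (add_le_toNat_of_le_sub hrank (Nat.ceil_lt_add_one (by positivity))) hos
    exact Or.inr (Set.mem_iUnion.2 ⟨k, S, hS⟩)
  · exact Or.inl hinj

/-- Lemma 4.1 (Lemma 2.6 of Inatsugu–Yoshida): for i.i.d. standard normal `W_1, …, W_n`,
with `a_n = ⌊(1-α)n - n^{1-γ₂}⌋` and events
`N_{n,j} = {r_n(|W_j|) ≤ a_n - n^{1-γ₂}} ∩ {|W|_{(a_n)} - |W_j| < n^{-γ₁}}`,
one has `P[⋃_j N_{n,j}] = O(n^{-L})` for every `L > 0`. -/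
theorem stmt_5 {Ω : Type*} [MeasurableSpace Ω] (P : Measure Ω) [IsProbabilityMeasure P]
    (α γ₁ γ₂ : ℝ) (hα : α ∈ Set.Ioo (0 : ℝ) 1)
    (hγ₂ : 0 < γ₂) (hγ₁₂ : γ₂ < γ₁) (hγ₁ : γ₁ < 1 / 2)
    (W : ℕ → ℕ → Ω → ℝ) (hWmeas : ∀ n k, Measurable (W n k))
    (hWindep : ∀ n : ℕ, iIndepFun (m := fun _ : Fin n => Real.measurableSpace)
      (fun j : Fin n => W n (j.1 + 1)) P)
    (hWlaw : ∀ n : ℕ, ∀ j ∈ Finset.Icc 1 n, Measure.map (W n j) P = gaussianReal 0 1)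
    (L : ℝ) (hL : 0 < L) :
    ∃ C : ℝ, ∀ᶠ n : ℕ in atTop,
      (P (⋃ j ∈ Finset.Icc 1 n,
        {ω : Ω |
          (rankIn (Finset.Icc 1 n) (fun i => |W n i ω|) j : ℝ)
              ≤ (⌊(1 - α) * (n : ℝ) - (n : ℝ) ^ (1 - γ₂)⌋ : ℝ) - (n : ℝ) ^ (1 - γ₂) ∧
          orderStatIn (Finset.Icc 1 n) (fun i => |W n i ω|)
              (⌊(1 - α) * (n : ℝ) - (n : ℝ) ^ (1 - γ₂)⌋).toNat
            - |W n j ω| < (n : ℝ) ^ (-γ₁)})).toReal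
      ≤ C * (n : ℝ) ^ (-L) :=
  stmt_5_general P α γ₁ γ₂ hα hγ₁₂ hγ₁ W hWmeas hWindep hWlaw L
end

section
/- Let n ∈ ℕ and let γ₂, γ₃, c* be positive real constants. On a probability space (Ω, F, P), let J_n and Ĵ_n be random finite subsets of I_n = {1,…,n} (measurable set-valued maps), let Ω_n be a measurable event, let Λ_n be a nonnegative real random variable, and let (U_j)_{j∈I_n} be real random variables. Assume that pointwise on Ω_n the symmetric difference satisfies #(J_n Δ Ĵ_n) ≤ c*·n^{1−γ₂} + Λ_n. Define D_n = n^{γ₃} | n^{−1} Σ_{j∈J_n} U_j − n^{−1} Σ_{j∈Ĵ_n} U_j |. Then for all p, p₁ with 1 < p < p₁: ‖D_n‖_p ≤ ( c*·n^{γ₃−γ₂} + n^{−1+γ₃} ‖Λ_n‖_{p₁} ) · ‖ max_{j≤n} |U_j| ‖_{p p₁ (p₁−p)^{−1}} + n^{γ₃} ‖ max_{j≤n} |U_j| · 1_{Ω_n^c} ‖_p. -/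
/-!
Off `Ω_n` the symmetric difference `J_n ∆ Ĵ_n` has at most `n` elements, so
`D_n ≤ n^{γ₃} max_j |U_j|`; on `Ω_n` the two sums only differ over `J_n ∆ Ĵ_n`, so
`D_n ≤ (c* n^{γ₃-γ₂} + n^{γ₃-1} Λ_n) max_j |U_j|`. Since `t ↦ t^{1/p}` is subadditive, the
`L^p` norm splits over `Ω_n` and its complement; Hölder with exponents `p₁/p` and
`p₁/(p₁-p)`, then Minkowski, bound the first piece. The `U_j` are not assumed measurable, so
Hölder is used in a form that needs only the first factor to be measurable.
-/

open MeasureTheory Finset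
open scoped ENNReal symmDiff

theorem Finset.abs_le_biSup_abs {ι : Type*} {u : Finset ι} (f : ι → ℝ) {j : ι} (hj : j ∈ u) :
    |f j| ≤ ⨆ i ∈ u, |f i| := by
  have hbdd : BddAbove (Set.range fun i => ⨆ _ : i ∈ u, |f i|) := by
    refine ⟨∑ i ∈ u, |f i|, ?_⟩
    rintro _ ⟨i, rfl⟩
    exact Real.iSup_le (fun hi => single_le_sum (fun k _ => abs_nonneg (f k)) hi)
      (sum_nonneg fun k _ => abs_nonneg _)
  simpa only [ciSup_pos hj] using le_ciSup hbdd j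

theorem Finset.abs_sum_sub_sum_le_card_symmDiff_mul {ι : Type*} [DecidableEq ι]
    (s t : Finset ι) {f : ι → ℝ} {C : ℝ} (hC : ∀ i ∈ s ∆ t, |f i| ≤ C) :
    |∑ i ∈ s, f i - ∑ i ∈ t, f i| ≤ #(s ∆ t) * C :=
  calc |∑ i ∈ s, f i - ∑ i ∈ t, f i|
      = |∑ i ∈ s \ t, f i - ∑ i ∈ t \ s, f i| := by rw [sum_sdiff_sub_sum_sdiff]
    _ ≤ ∑ i ∈ s \ t, |f i| + ∑ i ∈ t \ s, |f i| :=
        (abs_sub _ _).trans (add_le_add (abs_sum_le_sum_abs _ _) (abs_sum_le_sum_abs _ _))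
    _ = ∑ i ∈ s ∆ t, |f i| := by
        rw [symmDiff_def, sup_eq_union, sum_union disjoint_sdiff_sdiff]
    _ ≤ #(s ∆ t) * C := by simpa using sum_le_card_nsmul _ _ _ hC

section LpSeminorm

variable {α E : Type*} [MeasurableSpace α] [NormedAddCommGroup E] {p : ℝ≥0∞}

theorem eLpNorm_add_measure_le (hp : 1 ≤ p) (hp_top : p ≠ ∞) (f : α → E) (μ ν : Measure α) :
    eLpNorm f p (μ + ν) ≤ eLpNorm f p μ + eLpNorm f p ν := by
  have hp0 : p ≠ 0 := (zero_lt_one.trans_le hp).ne'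
  simp only [eLpNorm_eq_lintegral_rpow_enorm_toReal hp0 hp_top, lintegral_add_measure]
  have hp_real : 1 ≤ p.toReal := ENNReal.toReal_mono hp_top hp |>.trans_eq' (by simp)
  exact ENNReal.rpow_add_le_add_rpow _ _ (by positivity)
    ((div_le_one (by positivity)).2 hp_real)

theorem eLpNorm_le_add_of_le_on_compl {μ : Measure α} (hp : 1 ≤ p) (hp_top : p ≠ ∞)
    {s : Set α} (hs : MeasurableSet s) {f g h : α → E}
    (hg : ∀ x ∈ s, ‖f x‖ ≤ ‖g x‖) (hh : ∀ x ∈ sᶜ, ‖f x‖ ≤ ‖h x‖) :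
    eLpNorm f p μ ≤ eLpNorm g p μ + eLpNorm h p μ :=
  calc eLpNorm f p μ = eLpNorm f p (μ.restrict s + μ.restrict sᶜ) := by
        rw [Measure.restrict_add_restrict_compl hs]
    _ ≤ eLpNorm f p (μ.restrict s) + eLpNorm f p (μ.restrict sᶜ) :=
        eLpNorm_add_measure_le hp hp_top f _ _
    _ ≤ eLpNorm g p (μ.restrict s) + eLpNorm h p (μ.restrict sᶜ) :=
        add_le_add (eLpNorm_mono_ae (ae_restrict_of_forall_mem hs hg))
          (eLpNorm_mono_ae (ae_restrict_of_forall_mem hs.compl hh))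
    _ ≤ eLpNorm g p μ + eLpNorm h p μ :=
        add_le_add (eLpNorm_mono_measure _ Measure.restrict_le_self)
          (eLpNorm_mono_measure _ Measure.restrict_le_self)

theorem eLpNorm_const_add_le {μ : Measure α} [IsProbabilityMeasure μ] (hp : 1 ≤ p) (c : E)
    {f : α → E} (hf : AEStronglyMeasurable f μ) :
    eLpNorm (fun x => c + f x) p μ ≤ ‖c‖ₑ + eLpNorm f p μ := by
  have hp0 : p ≠ 0 := (zero_lt_one.trans_le hp).ne'
  calc eLpNorm (fun x => c + f x) p μ ≤ eLpNorm (fun _ => c) p μ + eLpNorm f p μ :=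
        eLpNorm_add_le aestronglyMeasurable_const hf hp
    _ = ‖c‖ₑ + eLpNorm f p μ := by
        rw [eLpNorm_const c hp0 (IsProbabilityMeasure.ne_zero μ), measure_univ,
          ENNReal.one_rpow, mul_one]

theorem eLpNorm_const_mul_of_nonneg {μ : Measure α} {a : ℝ} (ha : 0 ≤ a) (f : α → ℝ) :
    eLpNorm (fun x => a * f x) p μ = ENNReal.ofReal a * eLpNorm f p μ := by
  rw [← Real.enorm_of_nonneg ha, ← eLpNorm_const_smul]; rfl

end LpSeminorm

section Holder

variable {α : Type*} [MeasurableSpace α]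

theorem lintegral_mul_le_Lp_mul_Lq_of_measurable_left (μ : Measure α) {s t : ℝ}
    (hst : s.HolderConjugate t) {f g : α → ℝ≥0∞} (hf : Measurable f) (hf_top : ∀ x, f x ≠ ∞) :
    ∫⁻ x, f x * g x ∂μ ≤ (∫⁻ x, f x ^ s ∂μ) ^ (1 / s) * (∫⁻ x, g x ^ t ∂μ) ^ (1 / t) := by
  -- A measurable minorant `h` of `f * g` with the same integral yields a measurable `h / f ≤ g`.
  obtain ⟨h, hh_meas, hh_le, hh_eq⟩ := exists_measurable_le_lintegral_eq μ (fun x => f x * g x)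
  have hh_le_mul : ∀ x, h x ≤ f x * (h x / f x) := fun x => by
    rcases eq_or_ne (f x) 0 with hfx | hfx
    · simpa [hfx] using hh_le x
    · rw [ENNReal.mul_div_cancel hfx (hf_top x)]
  calc ∫⁻ x, f x * g x ∂μ = ∫⁻ x, h x ∂μ := hh_eq
    _ ≤ ∫⁻ x, f x * (h x / f x) ∂μ := lintegral_mono hh_le_mul
    _ ≤ (∫⁻ x, f x ^ s ∂μ) ^ (1 / s) * (∫⁻ x, (h x / f x) ^ t ∂μ) ^ (1 / t) :=
        ENNReal.lintegral_mul_le_Lp_mul_Lq μ hst hf.aemeasurable (hh_meas.div hf).aemeasurable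
    _ ≤ (∫⁻ x, f x ^ s ∂μ) ^ (1 / s) * (∫⁻ x, g x ^ t ∂μ) ^ (1 / t) := by
        have ht := hst.symm.nonneg
        gcongr with x
        exact ENNReal.div_le_of_le_mul' (hh_le x)

theorem eLpNorm_mul_le_of_measurable_left (μ : Measure α) {p s t : ℝ} (hp : 0 < p)
    (hst : s.HolderConjugate t) {φ M : α → ℝ} (hφ : Measurable φ) :
    eLpNorm (fun x => φ x * M x) (ENNReal.ofReal p) μ ≤
      eLpNorm φ (ENNReal.ofReal (p * s)) μ * eLpNorm M (ENNReal.ofReal (p * t)) μ := by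
  have hps : 0 < p * s := mul_pos hp hst.pos
  have hpt : 0 < p * t := mul_pos hp hst.symm.pos
  simp only [eLpNorm_eq_lintegral_rpow_enorm_toReal (ENNReal.ofReal_pos.2 _).ne'
    ENNReal.ofReal_ne_top, hp, hps, hpt, ENNReal.toReal_ofReal hp.le, ENNReal.toReal_ofReal hps.le,
    ENNReal.toReal_ofReal hpt.le, enorm_mul, ENNReal.mul_rpow_of_nonneg _ _ hp.le]
  have holder := lintegral_mul_le_Lp_mul_Lq_of_measurable_left μ hst
    (f := fun x => ‖φ x‖ₑ ^ p) (g := fun x => ‖M x‖ₑ ^ p) (hφ.enorm.pow_const p)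
    (fun x => ENNReal.rpow_ne_top_of_nonneg hp.le enorm_ne_top)
  simp only [← ENNReal.rpow_mul] at holder
  calc (∫⁻ x, ‖φ x‖ₑ ^ p * ‖M x‖ₑ ^ p ∂μ) ^ (1 / p)
      ≤ ((∫⁻ x, ‖φ x‖ₑ ^ (p * s) ∂μ) ^ (1 / s) *
          (∫⁻ x, ‖M x‖ₑ ^ (p * t) ∂μ) ^ (1 / t)) ^ (1 / p) := by gcongr
    _ = (∫⁻ x, ‖φ x‖ₑ ^ (p * s) ∂μ) ^ (1 / (p * s)) *
          (∫⁻ x, ‖M x‖ₑ ^ (p * t) ∂μ) ^ (1 / (p * t)) := by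
        rw [ENNReal.mul_rpow_of_nonneg _ _ (by positivity), ← ENNReal.rpow_mul,
          ← ENNReal.rpow_mul]
        congr 2 <;> field_simp

end Holder

theorem Finset.abs_sum_sub_sum_le_card_symmDiff_mul_biSup {ι : Type*} [DecidableEq ι]
    {s t u : Finset ι} (hs : s ⊆ u) (ht : t ⊆ u) (f : ι → ℝ) :
    |∑ i ∈ s, f i - ∑ i ∈ t, f i| ≤ #(s ∆ t) * ⨆ i ∈ u, |f i| :=
  abs_sum_sub_sum_le_card_symmDiff_mul s t fun _ hi =>
    u.abs_le_biSup_abs f (symmDiff_le_sup.trans (sup_le hs ht) hi)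

section Averages

variable {n : ℕ} {s t : Finset ℕ}

theorem rpow_mul_abs_avg_sub_avg_le (hn : 0 < n) (γ : ℝ) (hs : s ⊆ Icc 1 n) (ht : t ⊆ Icc 1 n)
    (f : ℕ → ℝ) :
    (n : ℝ) ^ γ * |1 / (n : ℝ) * ∑ j ∈ s, f j - 1 / (n : ℝ) * ∑ j ∈ t, f j| ≤
      (n : ℝ) ^ (-1 + γ) * (#(s ∆ t) * ⨆ j ∈ Icc 1 n, |f j|) := by
  have hn' : (0 : ℝ) < n := Nat.cast_pos.2 hn
  rw [← mul_sub, abs_mul, abs_of_pos (one_div_pos.2 hn'), ← mul_assoc, one_div,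
    ← Real.rpow_neg_one, ← Real.rpow_add hn', add_comm]
  gcongr
  exact abs_sum_sub_sum_le_card_symmDiff_mul_biSup hs ht f

theorem rpow_mul_abs_avg_sub_avg_le_of_card_symmDiff_le (hn : 0 < n) {γ γ' c l : ℝ}
    (hs : s ⊆ Icc 1 n) (ht : t ⊆ Icc 1 n) (f : ℕ → ℝ)
    (hcard : (#(s ∆ t) : ℝ) ≤ c * (n : ℝ) ^ (1 - γ') + l) :
    (n : ℝ) ^ γ * |1 / (n : ℝ) * ∑ j ∈ s, f j - 1 / (n : ℝ) * ∑ j ∈ t, f j| ≤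
      (c * (n : ℝ) ^ (γ - γ') + (n : ℝ) ^ (-1 + γ) * l) * ⨆ j ∈ Icc 1 n, |f j| := by
  have hexp : (n : ℝ) ^ (-1 + γ) * (n : ℝ) ^ (1 - γ') = (n : ℝ) ^ (γ - γ') := by
    rw [← Real.rpow_add (Nat.cast_pos.2 hn)]; ring_nf
  have hM : 0 ≤ ⨆ j ∈ Icc 1 n, |f j| :=
    Real.iSup_nonneg fun _ => Real.iSup_nonneg fun _ => abs_nonneg _
  calc _ ≤ (n : ℝ) ^ (-1 + γ) * (#(s ∆ t) * ⨆ j ∈ Icc 1 n, |f j|) :=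
        rpow_mul_abs_avg_sub_avg_le hn γ hs ht f
    _ ≤ (n : ℝ) ^ (-1 + γ) * ((c * (n : ℝ) ^ (1 - γ') + l) * ⨆ j ∈ Icc 1 n, |f j|) := by
        gcongr
    _ = _ := by linear_combination c * (⨆ j ∈ Icc 1 n, |f j|) * hexp

theorem rpow_mul_abs_avg_sub_avg_le_rpow_mul_biSup (hn : 0 < n) (γ : ℝ) (hs : s ⊆ Icc 1 n)
    (ht : t ⊆ Icc 1 n) (f : ℕ → ℝ) :
    (n : ℝ) ^ γ * |1 / (n : ℝ) * ∑ j ∈ s, f j - 1 / (n : ℝ) * ∑ j ∈ t, f j| ≤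
      (n : ℝ) ^ γ * ⨆ j ∈ Icc 1 n, |f j| := by
  have hn' : (0 : ℝ) < n := Nat.cast_pos.2 hn
  have hcard : (#(s ∆ t) : ℝ) ≤ n := by
    exact_mod_cast (card_le_card (symmDiff_le_sup.trans (sup_le hs ht))).trans_eq
      (by simp)
  have hM : 0 ≤ ⨆ j ∈ Icc 1 n, |f j| :=
    Real.iSup_nonneg fun _ => Real.iSup_nonneg fun _ => abs_nonneg _
  calc _ ≤ (n : ℝ) ^ (-1 + γ) * (#(s ∆ t) * ⨆ j ∈ Icc 1 n, |f j|) :=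
        rpow_mul_abs_avg_sub_avg_le hn γ hs ht f
    _ ≤ (n : ℝ) ^ (-1 + γ) * (n * ⨆ j ∈ Icc 1 n, |f j|) := by gcongr
    _ = _ := by rw [← mul_assoc, ← Real.rpow_add_one hn'.ne']; ring_nf

end Averages

theorem stmt_9_general {Ω : Type*} [MeasurableSpace Ω] (P : Measure Ω) [IsProbabilityMeasure P]
    (n : ℕ) (γ₂ γ₃ cstar : ℝ) (hcstar : 0 < cstar)
    (J Jhat : Ω → Finset ℕ)
    (hJsub : ∀ ω, J ω ⊆ Finset.Icc 1 n) (hJhatsub : ∀ ω, Jhat ω ⊆ Finset.Icc 1 n)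
    (Ωn : Set Ω) (hΩn : MeasurableSet Ωn)
    (Λ : Ω → ℝ) (hΛmeas : Measurable Λ)
    (U : ℕ → Ω → ℝ)
    (hsd : ∀ ω ∈ Ωn, (((J ω) ∆ (Jhat ω)).card : ℝ) ≤ cstar * (n : ℝ) ^ (1 - γ₂) + Λ ω)
    (p p₁ : ℝ) (hp : 1 < p) (hpp₁ : p < p₁) :
    eLpNorm (fun ω =>
        (n : ℝ) ^ γ₃ *
          |(1 / (n : ℝ)) * ∑ j ∈ J ω, U j ω - (1 / (n : ℝ)) * ∑ j ∈ Jhat ω, U j ω|)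
        (ENNReal.ofReal p) P
      ≤ (ENNReal.ofReal (cstar * (n : ℝ) ^ (γ₃ - γ₂))
            + ENNReal.ofReal ((n : ℝ) ^ (-1 + γ₃)) * eLpNorm Λ (ENNReal.ofReal p₁) P) *
          eLpNorm (fun ω => ⨆ j ∈ Finset.Icc 1 n, |U j ω|)
            (ENNReal.ofReal (p * p₁ / (p₁ - p))) P
        + ENNReal.ofReal ((n : ℝ) ^ γ₃) *
          eLpNorm (fun ω =>
              (⨆ j ∈ Finset.Icc 1 n, |U j ω|) * Set.indicator Ωnᶜ (fun _ => (1 : ℝ)) ω)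
            (ENNReal.ofReal p) P := by
  rcases n.eq_zero_or_pos with rfl | hn
  · simp -- `1 / 0 = 0` makes the left side vanish
  set M : Ω → ℝ := fun ω => ⨆ j ∈ Finset.Icc 1 n, |U j ω|
  set c₁ := cstar * (n : ℝ) ^ (γ₃ - γ₂)
  set c₂ := (n : ℝ) ^ (-1 + γ₃)
  have hp₀ : 0 < p := zero_lt_one.trans hp
  have hst : (p₁ / p).HolderConjugate (p₁ / (p₁ - p)) :=
    (Real.holderConjugate_iff_eq_conjExponent ((one_lt_div hp₀).2 hpp₁)).2 (by field_simp)
  have holder := eLpNorm_mul_le_of_measurable_left P hp₀ hst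
    ((hΛmeas.const_mul c₂).const_add c₁) (M := M)
  rw [mul_div_cancel₀ _ hp₀.ne', ← mul_div_assoc] at holder
  have hφ : eLpNorm (fun ω => c₁ + c₂ * Λ ω) (ENNReal.ofReal p₁) P ≤
      ENNReal.ofReal c₁ + ENNReal.ofReal c₂ * eLpNorm Λ (ENNReal.ofReal p₁) P := by
    grw [eLpNorm_const_add_le (ENNReal.one_le_ofReal.2 (hp.trans hpp₁).le) c₁
      (hΛmeas.const_mul c₂).aestronglyMeasurable, Real.enorm_of_nonneg (by positivity),
      eLpNorm_const_mul_of_nonneg (by positivity)]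
  calc _ ≤ eLpNorm (fun ω => (c₁ + c₂ * Λ ω) * M ω) (ENNReal.ofReal p) P +
        eLpNorm (fun ω => (n : ℝ) ^ γ₃ * (M ω * Set.indicator Ωnᶜ (fun _ => (1 : ℝ)) ω))
          (ENNReal.ofReal p) P := by
        refine eLpNorm_le_add_of_le_on_compl (by simpa using hp.le) ENNReal.ofReal_ne_top hΩn
          (fun ω hω => ?_) (fun ω hω => ?_) <;>
          rw [Real.norm_of_nonneg (by positivity)] <;> refine le_trans ?_ (Real.le_norm_self _)
        · exact rpow_mul_abs_avg_sub_avg_le_of_card_symmDiff_le hn (hJsub ω) (hJhatsub ω) _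
            (hsd ω hω)
        · rw [Set.indicator_of_mem hω, mul_one]
          exact rpow_mul_abs_avg_sub_avg_le_rpow_mul_biSup hn γ₃ (hJsub ω) (hJhatsub ω) _
    _ ≤ (ENNReal.ofReal c₁ + ENNReal.ofReal c₂ * eLpNorm Λ (ENNReal.ofReal p₁) P) *
          eLpNorm M (ENNReal.ofReal (p * p₁ / (p₁ - p))) P +
        ENNReal.ofReal ((n : ℝ) ^ γ₃) *
          eLpNorm (fun ω => M ω * Set.indicator Ωnᶜ (fun _ => (1 : ℝ)) ω) (ENNReal.ofReal p) P := by
        rw [eLpNorm_const_mul_of_nonneg (by positivity)]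
        grw [holder, hφ]

/-- Lemma 4.4(i) (Lemma 2.8 of Inatsugu–Yoshida): `L^p` bound for the difference of the
averages of `U` over the global jump filter `J_n` and over the Brownian rank filter `Ĵ_n`,
given the pathwise symmetric-difference bound on `Ω_n`. -/
theorem stmt_9 {Ω : Type*} [MeasurableSpace Ω] (P : Measure Ω) [IsProbabilityMeasure P]
    (n : ℕ) (γ₂ γ₃ cstar : ℝ) (hγ₂ : 0 < γ₂) (hγ₃ : 0 < γ₃) (hcstar : 0 < cstar)
    (J Jhat : Ω → Finset ℕ)
    (hJsub : ∀ ω, J ω ⊆ Finset.Icc 1 n) (hJhatsub : ∀ ω, Jhat ω ⊆ Finset.Icc 1 n)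
    (hJmeas : ∀ j, MeasurableSet {ω : Ω | j ∈ J ω})
    (hJhatmeas : ∀ j, MeasurableSet {ω : Ω | j ∈ Jhat ω})
    (Ωn : Set Ω) (hΩn : MeasurableSet Ωn)
    (Λ : Ω → ℝ) (hΛ0 : ∀ ω, 0 ≤ Λ ω) (hΛmeas : Measurable Λ)
    (U : ℕ → Ω → ℝ)
    (hsd : ∀ ω ∈ Ωn, (((J ω) ∆ (Jhat ω)).card : ℝ) ≤ cstar * (n : ℝ) ^ (1 - γ₂) + Λ ω)
    (p p₁ : ℝ) (hp : 1 < p) (hpp₁ : p < p₁) :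
    eLpNorm (fun ω =>
        (n : ℝ) ^ γ₃ *
          |(1 / (n : ℝ)) * ∑ j ∈ J ω, U j ω - (1 / (n : ℝ)) * ∑ j ∈ Jhat ω, U j ω|)
        (ENNReal.ofReal p) P
      ≤ (ENNReal.ofReal (cstar * (n : ℝ) ^ (γ₃ - γ₂))
            + ENNReal.ofReal ((n : ℝ) ^ (-1 + γ₃)) * eLpNorm Λ (ENNReal.ofReal p₁) P) *
          eLpNorm (fun ω => ⨆ j ∈ Finset.Icc 1 n, |U j ω|)
            (ENNReal.ofReal (p * p₁ / (p₁ - p))) P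
        + ENNReal.ofReal ((n : ℝ) ^ γ₃) *
          eLpNorm (fun ω =>
              (⨆ j ∈ Finset.Icc 1 n, |U j ω|) * Set.indicator Ωnᶜ (fun _ => (1 : ℝ)) ω)
            (ENNReal.ofReal p) P :=
  stmt_9_general P n γ₂ γ₃ cstar hcstar J Jhat hJsub hJhatsub Ωn hΩn Λ hΛmeas U hsd p p₁ hp hpp₁
end
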